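/- arXiv:1807.04986 — 7 statements merged into one kernel-verified Lean document; each statement's English description precedes it below -/
import Mathlib

section
/- Fix κ ∈ (0,1) and set a = κ²/2 − 9/8 and g = −3/2 + κ. Define f : ℝ → ℝ by f(x) = e^{4πgx}(4πax − 3/2) − 2πg²x + 3/2. Then f(x) ≥ 0 for every x ∈ [0, κ/(2π(9/4 − κ²))]. -/
/-- For `y ≤ 0`, `exp y ≤ 1 + y + y²/2`. -/
lemma exp_le_quadratic_of_nonpos {y : ℝ} (hy : y ≤ 0) :
    Real.exp y ≤ 1 + y + y ^ 2 / 2 := by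
  have hu : 0 ≤ -y := by linarith
  have h1 : 1 + (-y) + (-y) ^ 2 / 2 ≤ Real.exp (-y) :=
    Real.quadratic_le_exp_of_nonneg hu
  have hEpos : 0 < Real.exp (-y) := Real.exp_pos _
  have hkey : Real.exp y * Real.exp (-y) = 1 := by
    rw [← Real.exp_add]; simp
  -- exp y = 1 / exp (-y) ≤ 1 / (1 - y + y²/2) ≤ 1 + y + y²/2
  have hq : (0:ℝ) < 1 - y + y ^ 2 / 2 := by nlinarith
  have h2 : Real.exp y ≤ 1 / (1 - y + y ^ 2 / 2) := by
    rw [le_div_iff₀ hq]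
    nlinarith [Real.exp_pos y, h1, mul_le_mul_of_nonneg_left h1 (Real.exp_pos y).le]
  calc Real.exp y ≤ 1 / (1 - y + y ^ 2 / 2) := h2
    _ ≤ 1 + y + y ^ 2 / 2 := by
        rw [div_le_iff₀ hq]; nlinarith [sq_nonneg y, sq_nonneg (y^2)]

/-- Fix `κ ∈ (0,1)`, `a = κ²/2 − 9/8`, `g = −3/2 + κ`. The function
`f(x) = e^{4πgx}(4πax − 3/2) − 2πg²x + 3/2` is nonnegative on
`[0, κ/(2π(9/4 − κ²))]`. -/
theorem stmt_0 (κ a g : ℝ) (hκ : κ ∈ Set.Ioo (0 : ℝ) 1)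
    (ha : a = κ ^ 2 / 2 - 9 / 8) (hg : g = -3 / 2 + κ)
    (x : ℝ) (hx : x ∈ Set.Icc (0 : ℝ) (κ / (2 * Real.pi * (9 / 4 - κ ^ 2)))) :
    0 ≤ Real.exp (4 * Real.pi * g * x) * (4 * Real.pi * a * x - 3 / 2)
        - 2 * Real.pi * g ^ 2 * x + 3 / 2 := by
  obtain ⟨hκ0, hκ1⟩ := hκ
  obtain ⟨hx0, hxT⟩ := hx
  have hπ : 0 < Real.pi := Real.pi_pos
  have hanneg : a < 0 := by nlinarith
  have hgneg : g < 0 := by linarith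
  -- upper bound on x : 4πax ≥ -κ
  have hdenpos : 0 < 2 * Real.pi * (9 / 4 - κ ^ 2) := by nlinarith
  have hxT' : x * (2 * Real.pi * (9 / 4 - κ ^ 2)) ≤ κ := by
    rw [← le_div_iff₀ hdenpos]; exact hxT
  have hax : -κ ≤ 4 * Real.pi * a * x := by nlinarith
  -- exponential bound
  have hyle : 4 * Real.pi * g * x ≤ 0 := by nlinarith [mul_nonneg hπ.le hx0]
  have hE := exp_le_quadratic_of_nonpos hyle
  have hmulneg : 4 * Real.pi * a * x - 3 / 2 < 0 := by nlinarith
  have h3 : Real.exp (4 * Real.pi * g * x) * (4 * Real.pi * a * x - 3 / 2)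
      ≥ (1 + 4 * Real.pi * g * x + (4 * Real.pi * g * x) ^ 2 / 2)
        * (4 * Real.pi * a * x - 3 / 2) := by nlinarith
  -- polynomial part: equals 8π²g²x²(κ + 4πax) ≥ 0
  have hfac : (1 + 4 * Real.pi * g * x + (4 * Real.pi * g * x) ^ 2 / 2)
        * (4 * Real.pi * a * x - 3 / 2) - 2 * Real.pi * g ^ 2 * x + 3 / 2
      = 8 * Real.pi ^ 2 * g ^ 2 * x ^ 2 * (κ + 4 * Real.pi * a * x) := by
    subst ha hg; ring
  nlinarith [mul_nonneg (mul_nonneg (by positivity : (0:ℝ) ≤ 8 * Real.pi ^ 2 * g ^ 2) (sq_nonneg x)) (by linarith : (0:ℝ) ≤ κ + 4 * Real.pi * a * x)]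
end

section
/- Fix κ ∈ (0,1) and set a = κ²/2 − 9/8 and g = −3/2 + κ. Define f : ℝ → ℝ by f(x) = e^{4πgx}(4πax − 3/2) − 2πg²x + 3/2. Then f(x) ≤ 8π²·a·g·x² for every x ≥ 0 (here a < 0 and g < 0, so the right-hand side is nonnegative). -/
/-- Quadratic upper bound for `exp` on the nonpositive reals. -/
lemma exp_le_quad {t : ℝ} (ht : t ≤ 0) : Real.exp t ≤ 1 + t + t ^ 2 / 2 := by
  have hanti : AntitoneOn (fun y : ℝ => 1 + y + y ^ 2 / 2 - Real.exp y) (Set.Iic 0) := by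
    have hd : ∀ y : ℝ, HasDerivAt (fun y : ℝ => 1 + y + y ^ 2 / 2 - Real.exp y)
        (0 + 1 + (2 * y ^ 1) / 2 - Real.exp y) y := by
      intro y
      exact (((hasDerivAt_const y (1:ℝ)).add (hasDerivAt_id y)).add
        ((hasDerivAt_pow 2 y).div_const 2)).sub (Real.hasDerivAt_exp y)
    apply antitoneOn_of_deriv_nonpos (convex_Iic 0)
    · exact (Continuous.continuousOn (by continuity))
    · intro y _; exact ((hd y).differentiableAt).differentiableWithinAt
    · intro y _
      rw [(hd y).deriv]
      have := Real.add_one_le_exp y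
      nlinarith
  have h := hanti (Set.mem_Iic.2 ht) (Set.mem_Iic.2 le_rfl) ht
  simp only [Real.exp_zero] at h
  nlinarith [h]

/-- Cubic lower bound for `exp` on the nonpositive reals. -/
lemma cubic_le_exp {t : ℝ} (ht : t ≤ 0) :
    1 + t + t ^ 2 / 2 + t ^ 3 / 6 ≤ Real.exp t := by
  have hanti : AntitoneOn (fun y : ℝ => Real.exp y - (1 + y + y ^ 2 / 2 + y ^ 3 / 6))
      (Set.Iic 0) := by
    have hd : ∀ y : ℝ, HasDerivAt (fun y : ℝ => Real.exp y - (1 + y + y ^ 2 / 2 + y ^ 3 / 6))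
        (Real.exp y - (0 + 1 + (2 * y ^ 1) / 2 + (3 * y ^ 2) / 6)) y := by
      intro y
      exact (Real.hasDerivAt_exp y).sub ((((hasDerivAt_const y (1:ℝ)).add
        (hasDerivAt_id y)).add ((hasDerivAt_pow 2 y).div_const 2)).add
        ((hasDerivAt_pow 3 y).div_const 6))
    apply antitoneOn_of_deriv_nonpos (convex_Iic 0)
    · exact (Continuous.continuousOn (by continuity))
    · intro y _; exact ((hd y).differentiableAt).differentiableWithinAt
    · intro y hy
      rw [(hd y).deriv]
      rw [interior_Iic] at hy
      have := exp_le_quad (le_of_lt hy)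
      nlinarith
  have h := hanti (Set.mem_Iic.2 ht) (Set.mem_Iic.2 le_rfl) ht
  simp only [Real.exp_zero] at h
  nlinarith [h]

lemma stmt_1_aux (a g u : ℝ) (hgl : -3/2 < g) (hgu : g < -1/2)
    (h2a : 2 * a = g ^ 2 + 3 * g) (hu : 0 ≤ u) :
    Real.exp (g * u) * (a * u - 3/2) - g ^ 2 * u / 2 + 3/2 ≤ a * g * u ^ 2 / 2 := by
  have hg0 : g < 0 := by linarith
  have ha0 : a < 0 := by nlinarith
  have hgu0 : g * u ≤ 0 := mul_nonpos_of_nonpos_of_nonneg (le_of_lt hg0) hu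
  have hfac : a * u - 3/2 ≤ 0 := by nlinarith
  rcases le_or_gt (g * u) (-2) with hcase | hcase
  · -- far case: drop the exponential term
    have hE : Real.exp (g * u) * (a * u - 3/2) ≤ 0 :=
      mul_nonpos_of_nonneg_of_nonpos (le_of_lt (Real.exp_pos _)) hfac
    have hq : (g * u) ^ 2 ≥ 4 := by nlinarith
    have h3 : a * g * u ^ 2 = (g + 3) * (g * u) ^ 2 / 2 := by
      linear_combination (g * u ^ 2 / 2) * h2a
    have h4 : (g + 3) * (g * u) ^ 2 / 2 ≥ 2 * (g + 3) := by
      nlinarith [mul_nonneg (by linarith : (0:ℝ) ≤ g + 3)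
        (by linarith : (0:ℝ) ≤ (g * u) ^ 2 - 4)]
    have h5 : g ^ 2 * u / 2 ≥ -g := by
      nlinarith [mul_nonneg (by linarith : (0:ℝ) ≤ -g)
        (by linarith : (0:ℝ) ≤ -(g * u + 2))]
    linarith [hE, h3, h4, h5]
  · -- near case: use the cubic lower bound for exp
    have hcub := cubic_le_exp hgu0
    have hmul : Real.exp (g * u) * (a * u - 3/2) ≤
        (1 + g * u + (g * u) ^ 2 / 2 + (g * u) ^ 3 / 6) * (a * u - 3/2) :=
      mul_le_mul_of_nonpos_right hcub hfac
    have hR : 0 ≤ 3 + 3 * (g + 2) * u + (g ^ 2 + 3 * g) * u ^ 2 := by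
      nlinarith [mul_nonneg (by linarith : (0:ℝ) ≤ g * u + 2)
        (mul_nonneg (by linarith : (0:ℝ) ≤ g + 3) hu)]
    have hg3 : 0 ≤ -g ^ 3 := by nlinarith [sq_nonneg g]
    have hkey : 0 ≤ (-g ^ 3) * u ^ 2 * (3 + 3 * (g + 2) * u + (g ^ 2 + 3 * g) * u ^ 2) :=
      mul_nonneg (mul_nonneg hg3 (sq_nonneg u)) hR
    have hid : a * g * u ^ 2 / 2 - ((1 + g * u + (g * u) ^ 2 / 2 + (g * u) ^ 3 / 6)
          * (a * u - 3/2) - g ^ 2 * u / 2 + 3/2)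
        = (-g ^ 3 * u ^ 2 / 12) * (3 + 3 * (g + 2) * u + (g ^ 2 + 3 * g) * u ^ 2)
          + ((g * u ^ 2 / 2 - u * (1 + g * u + (g * u) ^ 2 / 2 + (g * u) ^ 3 / 6)) / 2)
            * (2 * a - (g ^ 2 + 3 * g)) := by ring
    rw [h2a] at hid
    simp only [sub_self, mul_zero, add_zero] at hid
    linarith [hmul, hkey, hid]

/-- Fix `κ ∈ (0,1)`, `a = κ²/2 − 9/8`, `g = −3/2 + κ`. The function
`f(x) = e^{4πgx}(4πax − 3/2) − 2πg²x + 3/2` satisfies `f(x) ≤ 8π²agx²` for all `x ≥ 0`. -/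
theorem stmt_1 (κ a g : ℝ) (hκ : κ ∈ Set.Ioo (0 : ℝ) 1)
    (ha : a = κ ^ 2 / 2 - 9 / 8) (hg : g = -3 / 2 + κ)
    (x : ℝ) (hx : 0 ≤ x) :
    Real.exp (4 * Real.pi * g * x) * (4 * Real.pi * a * x - 3 / 2)
        - 2 * Real.pi * g ^ 2 * x + 3 / 2 ≤ 8 * Real.pi ^ 2 * a * g * x ^ 2 := by
  obtain ⟨hκ0, hκ1⟩ := hκ
  have hπ : (0:ℝ) < Real.pi := Real.pi_pos
  have key := stmt_1_aux a g (4 * Real.pi * x)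
    (by linarith) (by linarith)
    (by rw [ha, hg]; ring) (by positivity)
  have e1 : 4 * Real.pi * g * x = g * (4 * Real.pi * x) := by ring
  have e2 : 4 * Real.pi * a * x = a * (4 * Real.pi * x) := by ring
  have e3 : 2 * Real.pi * g ^ 2 * x = g ^ 2 * (4 * Real.pi * x) / 2 := by ring
  have e4 : 8 * Real.pi ^ 2 * a * g * x ^ 2 = a * g * (4 * Real.pi * x) ^ 2 / 2 := by ring
  rw [e1, e2, e3, e4]
  exact key
end

section
/- Suppose r, Ω, ψ satisfy the toroidally symmetric Einstein–Klein-Gordon system (EKG1)–(EKG5) on U. Then the first renormalised Hawking mass ϖ₁ = 2rᵤrᵥr/Ω² + r³/(2l²) satisfies the transport equations ∂ᵤϖ₁ = −8πr²(rᵥ/Ω²)ψᵤ² + (4πr²a/l²)rᵤψ² and ∂ᵥϖ₁ = −8πr²(rᵤ/Ω²)ψᵥ² + (4πr²a/l²)rᵥψ². -/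
/-- Partial derivative in the first (`u`) coordinate. -/
noncomputable def pdu (f : ℝ × ℝ → ℝ) (p : ℝ × ℝ) : ℝ := deriv (fun u => f (u, p.2)) p.1

/-- Partial derivative in the second (`v`) coordinate. -/
noncomputable def pdv (f : ℝ × ℝ → ℝ) (p : ℝ × ℝ) : ℝ := deriv (fun v => f (p.1, v)) p.2

/-
Write `ϖ₁ = 2 r X rᵥ + r³/(2l²)` with `X = rᵤ/Ω²`. By the product rule
`∂ᵤϖ₁ = 2 rᵤ X rᵥ + 2 r (∂ᵤX) rᵥ + 2 r X ∂ᵤrᵥ + 3r²rᵤ/(2l²)`, where (EKG1) is exactly the value of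
`∂ᵤX` and (EKG3), the mixed partials commuting, that of `∂ᵤrᵥ`; the terms `±2rᵤ²rᵥ/Ω²` and
`±3r²rᵤ/(2l²)` then cancel. The `v`-equation is the `u`-equation for the system reflected by
`(u, v) ↦ (v, u)`, which exchanges (EKG1) and (EKG2).
-/

section Slices

variable {f : ℝ × ℝ → ℝ} {p : ℝ × ℝ}

theorem HasFDerivAt.hasDerivAt_uSlice {f' : (ℝ × ℝ) →L[ℝ] ℝ} (hf : HasFDerivAt f f' p) :
    HasDerivAt (fun u => f (u, p.2)) (f' (1, 0)) p.1 :=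
  HasFDerivAt.comp_hasDerivAt (x := p.1) (f := fun u => (u, p.2)) hf
    ((hasDerivAt_id p.1).prodMk (hasDerivAt_const _ _))

theorem HasFDerivAt.hasDerivAt_vSlice {f' : (ℝ × ℝ) →L[ℝ] ℝ} (hf : HasFDerivAt f f' p) :
    HasDerivAt (fun v => f (p.1, v)) (f' (0, 1)) p.2 :=
  HasFDerivAt.comp_hasDerivAt (x := p.2) (f := fun v => (p.1, v)) hf
    ((hasDerivAt_const _ _).prodMk (hasDerivAt_id p.2))

theorem HasFDerivAt.pdu_eq {f' : (ℝ × ℝ) →L[ℝ] ℝ} (hf : HasFDerivAt f f' p) :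
    pdu f p = f' (1, 0) :=
  hf.hasDerivAt_uSlice.deriv

theorem HasFDerivAt.pdv_eq {f' : (ℝ × ℝ) →L[ℝ] ℝ} (hf : HasFDerivAt f f' p) :
    pdv f p = f' (0, 1) :=
  hf.hasDerivAt_vSlice.deriv

theorem DifferentiableAt.hasDerivAt_pdu (hf : DifferentiableAt ℝ f p) :
    HasDerivAt (fun u => f (u, p.2)) (pdu f p) p.1 :=
  hf.hasFDerivAt.hasDerivAt_uSlice.differentiableAt.hasDerivAt

theorem DifferentiableAt.comp_swap (hf : DifferentiableAt ℝ f p) :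
    DifferentiableAt ℝ (f ∘ Prod.swap) p.swap :=
  hf.comp _ (differentiableAt_snd.prodMk differentiableAt_fst)

@[simp]
theorem pdu_comp_swap (p : ℝ × ℝ) : pdu (f ∘ Prod.swap) p = pdv f p.swap := rfl

@[simp]
theorem pdv_comp_swap (p : ℝ × ℝ) : pdv (f ∘ Prod.swap) p = pdu f p.swap := rfl

end Slices

section SecondDerivatives

theorem hasFDerivAt_fderiv_apply {E F : Type*} [NormedAddCommGroup E] [NormedSpace ℝ E]
    [NormedAddCommGroup F] [NormedSpace ℝ F] {U : Set E} {f : E → F} {p : E}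
    (hU : IsOpen U) (hf : ContDiffOn ℝ 2 f U) (hp : p ∈ U) (e : E) :
    HasFDerivAt (fun q => fderiv ℝ f q e)
      ((ContinuousLinearMap.apply ℝ F e).comp (fderiv ℝ (fderiv ℝ f) p)) p := by
  have hd : DifferentiableAt ℝ (fderiv ℝ f) p :=
    ((hf.fderiv_of_isOpen hU (m := 1) (by norm_num)).differentiableOn one_ne_zero).differentiableAt
      (hU.mem_nhds hp)
  exact (ContinuousLinearMap.apply ℝ F e).hasFDerivAt.comp p hd.hasFDerivAt

variable {U : Set (ℝ × ℝ)} {f : ℝ × ℝ → ℝ} {p : ℝ × ℝ}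

theorem hasFDerivAt_pdu (hU : IsOpen U) (hf : ContDiffOn ℝ 2 f U) (hp : p ∈ U) :
    HasFDerivAt (pdu f)
      ((ContinuousLinearMap.apply ℝ ℝ (1, 0)).comp (fderiv ℝ (fderiv ℝ f) p)) p := by
  refine (hasFDerivAt_fderiv_apply hU hf hp (1, 0)).congr_of_eventuallyEq ?_
  filter_upwards [hU.mem_nhds hp] with q hq
  exact (((hf.differentiableOn (by norm_num)).differentiableAt
    (hU.mem_nhds hq)).hasFDerivAt).pdu_eq

theorem hasFDerivAt_pdv (hU : IsOpen U) (hf : ContDiffOn ℝ 2 f U) (hp : p ∈ U) :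
    HasFDerivAt (pdv f)
      ((ContinuousLinearMap.apply ℝ ℝ (0, 1)).comp (fderiv ℝ (fderiv ℝ f) p)) p := by
  refine (hasFDerivAt_fderiv_apply hU hf hp (0, 1)).congr_of_eventuallyEq ?_
  filter_upwards [hU.mem_nhds hp] with q hq
  exact (((hf.differentiableOn (by norm_num)).differentiableAt
    (hU.mem_nhds hq)).hasFDerivAt).pdv_eq

theorem pdu_pdv_comm (hU : IsOpen U) (hf : ContDiffOn ℝ 2 f U) (hp : p ∈ U) :
    pdu (pdv f) p = pdv (pdu f) p := by
  rw [(hasFDerivAt_pdv hU hf hp).pdu_eq, (hasFDerivAt_pdu hU hf hp).pdv_eq]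
  exact ((hf.contDiffAt (hU.mem_nhds hp)).isSymmSndFDerivAt (by simp)) (1, 0) (0, 1)

end SecondDerivatives

/-- The first renormalised Hawking mass `ϖ₁`. -/
noncomputable def hawkingMass (l : ℝ) (r Ω : ℝ × ℝ → ℝ) (q : ℝ × ℝ) : ℝ :=
  2 * pdu r q * pdv r q * r q / (Ω q) ^ 2 + (r q) ^ 3 / (2 * l ^ 2)

theorem hawkingMass_comp_swap (l : ℝ) (r Ω : ℝ × ℝ → ℝ) :
    hawkingMass l (r ∘ Prod.swap) (Ω ∘ Prod.swap) = hawkingMass l r Ω ∘ Prod.swap := by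
  funext q
  simp only [hawkingMass, pdu_comp_swap, pdv_comp_swap, Function.comp_apply]
  ring

section TransportEquations

variable {r Ω ψ : ℝ × ℝ → ℝ} {l a : ℝ} {p : ℝ × ℝ}

theorem pdu_hawkingMass (hr : DifferentiableAt ℝ r p) (hru : DifferentiableAt ℝ (pdu r) p)
    (hrv : DifferentiableAt ℝ (pdv r) p) (hΩ : DifferentiableAt ℝ Ω p)
    (hr0 : r p ≠ 0) (hΩ0 : Ω p ≠ 0)
    (hEKG1 : pdu (fun q => pdu r q / (Ω q) ^ 2) p
        = -(4 * Real.pi) * r p * (pdu ψ p) ^ 2 / (Ω p) ^ 2)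
    (hEKG3 : pdu (pdv r) p = -(pdu r p * pdv r p) / r p
        + (2 * Real.pi * a * r p / l ^ 2) * (Ω p) ^ 2 * (ψ p) ^ 2
        - (3 / 4) * (r p / l ^ 2) * (Ω p) ^ 2) :
    pdu (hawkingMass l r Ω) p
      = -(8 * Real.pi) * (r p) ^ 2 * (pdv r p / (Ω p) ^ 2) * (pdu ψ p) ^ 2
        + (4 * Real.pi * (r p) ^ 2 * a / l ^ 2) * pdu r p * (ψ p) ^ 2 := by
  have hX : DifferentiableAt ℝ (fun q => pdu r q / (Ω q) ^ 2) p := by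
    fun_prop (disch := exact pow_ne_zero 2 hΩ0)
  have hmass : hawkingMass l r Ω
      = fun q => 2 * r q * (pdu r q / (Ω q) ^ 2) * pdv r q + (r q) ^ 3 / (2 * l ^ 2) := by
    funext q
    rw [hawkingMass]
    ring
  rw [hmass]
  refine ((((hr.hasDerivAt_pdu.const_mul 2).fun_mul hX.hasDerivAt_pdu).fun_mul
    hrv.hasDerivAt_pdu).fun_add ((hr.hasDerivAt_pdu.fun_pow 3).div_const _)).deriv.trans ?_
  rw [hEKG1, hEKG3]
  field_simp
  ring

theorem pdv_hawkingMass (hr : DifferentiableAt ℝ r p) (hru : DifferentiableAt ℝ (pdu r) p)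
    (hrv : DifferentiableAt ℝ (pdv r) p) (hΩ : DifferentiableAt ℝ Ω p)
    (hr0 : r p ≠ 0) (hΩ0 : Ω p ≠ 0)
    (hEKG2 : pdv (fun q => pdv r q / (Ω q) ^ 2) p
        = -(4 * Real.pi) * r p * (pdv ψ p) ^ 2 / (Ω p) ^ 2)
    (hEKG3 : pdv (pdu r) p = -(pdu r p * pdv r p) / r p
        + (2 * Real.pi * a * r p / l ^ 2) * (Ω p) ^ 2 * (ψ p) ^ 2
        - (3 / 4) * (r p / l ^ 2) * (Ω p) ^ 2) :
    pdv (hawkingMass l r Ω) p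
      = -(8 * Real.pi) * (r p) ^ 2 * (pdu r p / (Ω p) ^ 2) * (pdv ψ p) ^ 2
        + (4 * Real.pi * (r p) ^ 2 * a / l ^ 2) * pdv r p * (ψ p) ^ 2 := by
  have h := pdu_hawkingMass (ψ := ψ ∘ Prod.swap) (l := l) (a := a) hr.comp_swap hrv.comp_swap
    hru.comp_swap hΩ.comp_swap hr0 hΩ0 hEKG2 <| hEKG3.trans <| by
      simp only [pdu_comp_swap, pdv_comp_swap, Function.comp_apply, Prod.swap_swap]
      ring
  rwa [hawkingMass_comp_swap] at h

end TransportEquations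

theorem stmt_2_general (U : Set (ℝ × ℝ)) (hU : IsOpen U)
    (r Ω ψ : ℝ × ℝ → ℝ)
    (l a : ℝ)
    (hrC : ContDiffOn ℝ 2 r U) (hΩC : ContDiffOn ℝ 2 Ω U)
    (hrpos : ∀ p ∈ U, 0 < r p) (hΩpos : ∀ p ∈ U, 0 < Ω p)
    (hEKG1 : ∀ p ∈ U, pdu (fun q => pdu r q / (Ω q) ^ 2) p
        = -(4 * Real.pi) * r p * (pdu ψ p) ^ 2 / (Ω p) ^ 2)
    (hEKG2 : ∀ p ∈ U, pdv (fun q => pdv r q / (Ω q) ^ 2) p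
        = -(4 * Real.pi) * r p * (pdv ψ p) ^ 2 / (Ω p) ^ 2)
    (hEKG3 : ∀ p ∈ U, pdv (pdu r) p = -(pdu r p * pdv r p) / r p
        + (2 * Real.pi * a * r p / l ^ 2) * (Ω p) ^ 2 * (ψ p) ^ 2
        - (3 / 4) * (r p / l ^ 2) * (Ω p) ^ 2) :
    ∀ p ∈ U,
      pdu (fun q => 2 * pdu r q * pdv r q * r q / (Ω q) ^ 2 + (r q) ^ 3 / (2 * l ^ 2)) p
        = -(8 * Real.pi) * (r p) ^ 2 * (pdv r p / (Ω p) ^ 2) * (pdu ψ p) ^ 2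
          + (4 * Real.pi * (r p) ^ 2 * a / l ^ 2) * pdu r p * (ψ p) ^ 2
      ∧
      pdv (fun q => 2 * pdu r q * pdv r q * r q / (Ω q) ^ 2 + (r q) ^ 3 / (2 * l ^ 2)) p
        = -(8 * Real.pi) * (r p) ^ 2 * (pdu r p / (Ω p) ^ 2) * (pdv ψ p) ^ 2
          + (4 * Real.pi * (r p) ^ 2 * a / l ^ 2) * pdv r p * (ψ p) ^ 2 := by
  intro p hp
  have hr := (hrC.differentiableOn (by norm_num)).differentiableAt (hU.mem_nhds hp)
  have hΩ := (hΩC.differentiableOn (by norm_num)).differentiableAt (hU.mem_nhds hp)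
  have hru := (hasFDerivAt_pdu hU hrC hp).differentiableAt
  have hrv := (hasFDerivAt_pdv hU hrC hp).differentiableAt
  exact ⟨pdu_hawkingMass hr hru hrv hΩ (hrpos p hp).ne' (hΩpos p hp).ne' (hEKG1 p hp)
      ((pdu_pdv_comm hU hrC hp).trans (hEKG3 p hp)),
    pdv_hawkingMass hr hru hrv hΩ (hrpos p hp).ne' (hΩpos p hp).ne' (hEKG2 p hp) (hEKG3 p hp)⟩

/-- If `r, Ω, ψ` satisfy the toroidally symmetric Einstein–Klein-Gordon system
(EKG1)–(EKG5) on an open set `U`, then the first renormalised Hawking mass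
`ϖ₁ = 2rᵤrᵥr/Ω² + r³/(2l²)` satisfies the transport equations
`∂ᵤϖ₁ = −8πr²(rᵥ/Ω²)ψᵤ² + (4πr²a/l²)rᵤψ²` and
`∂ᵥϖ₁ = −8πr²(rᵤ/Ω²)ψᵥ² + (4πr²a/l²)rᵥψ²`. -/
theorem stmt_2 (U : Set (ℝ × ℝ)) (hU : IsOpen U)
    (r Ω ψ : ℝ × ℝ → ℝ)
    (l κ a g : ℝ) (hl : 0 < l) (hκ : κ ∈ Set.Ioo (0 : ℝ) 1)
    (ha : a = κ ^ 2 / 2 - 9 / 8) (hg : g = -3 / 2 + κ)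
    (hrC : ContDiffOn ℝ 2 r U) (hΩC : ContDiffOn ℝ 2 Ω U) (hψC : ContDiffOn ℝ 2 ψ U)
    (hrpos : ∀ p ∈ U, 0 < r p) (hΩpos : ∀ p ∈ U, 0 < Ω p)
    (hEKG1 : ∀ p ∈ U, pdu (fun q => pdu r q / (Ω q) ^ 2) p
        = -(4 * Real.pi) * r p * (pdu ψ p) ^ 2 / (Ω p) ^ 2)
    (hEKG2 : ∀ p ∈ U, pdv (fun q => pdv r q / (Ω q) ^ 2) p
        = -(4 * Real.pi) * r p * (pdv ψ p) ^ 2 / (Ω p) ^ 2)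
    (hEKG3 : ∀ p ∈ U, pdv (pdu r) p = -(pdu r p * pdv r p) / r p
        + (2 * Real.pi * a * r p / l ^ 2) * (Ω p) ^ 2 * (ψ p) ^ 2
        - (3 / 4) * (r p / l ^ 2) * (Ω p) ^ 2)
    (hEKG4 : ∀ p ∈ U, pdv (pdu (fun q => Real.log (Ω q))) p
        = -(4 * Real.pi) * pdu ψ p * pdv ψ p + (pdu r p * pdv r p) / (r p) ^ 2)
    (hEKG5 : ∀ p ∈ U, pdv (pdu ψ) p = -(pdu r p / r p) * pdv ψ p
        - (pdv r p / r p) * pdu ψ p - ((Ω p) ^ 2 * a / (2 * l ^ 2)) * ψ p) :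
    ∀ p ∈ U,
      pdu (fun q => 2 * pdu r q * pdv r q * r q / (Ω q) ^ 2 + (r q) ^ 3 / (2 * l ^ 2)) p
        = -(8 * Real.pi) * (r p) ^ 2 * (pdv r p / (Ω p) ^ 2) * (pdu ψ p) ^ 2
          + (4 * Real.pi * (r p) ^ 2 * a / l ^ 2) * pdu r p * (ψ p) ^ 2
      ∧
      pdv (fun q => 2 * pdu r q * pdv r q * r q / (Ω q) ^ 2 + (r q) ^ 3 / (2 * l ^ 2)) p
        = -(8 * Real.pi) * (r p) ^ 2 * (pdu r p / (Ω p) ^ 2) * (pdv ψ p) ^ 2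
          + (4 * Real.pi * (r p) ^ 2 * a / l ^ 2) * pdv r p * (ψ p) ^ 2 :=
  stmt_2_general U hU r Ω ψ l a hrC hΩC hrpos hΩpos hEKG1 hEKG2 hEKG3
end

section
/- Let κ ∈ (0,1) and g = −3/2 + κ. Let u_I < u₁, let r : (u_I, u₁] → (0,∞) be continuously differentiable with r'(u) < 0 for all u and r(u) → ∞ as u → u_I⁺, and let ψ : (u_I, u₁] → ℝ be continuously differentiable with r(u)ψ(u)² → 0 as u → u_I⁺. Define the twisted derivative ∇̃ψ = ψ' − g(r'/r)ψ, and suppose the integrals ∫_{u_I}^{u₁} (−r')ψ² du and ∫_{u_I}^{u₁} (r²/(−r'))(∇̃ψ)² du are finite. Then the Hardy inequality ∫_{u_I}^{u₁} (−r'(u))ψ(u)² du ≤ r(u₁)ψ(u₁)²/(1−κ) + (1−κ)^{−2} ∫_{u_I}^{u₁} (r(u)²/(−r'(u)))(∇̃ψ(u))² du holds. -/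
open MeasureTheory Set Filter Topology intervalIntegral

/-!
Since `1 + 2g = -2(1 - κ)`, the product rule gives `(r ψ²)' = 2(1 - κ)(-r')ψ² + 2 r ψ ∇̃ψ`.
Absorbing the cross term by AM-GM leaves
`(1 - κ)(-r')ψ² ≤ (r ψ²)' + (1 - κ)⁻¹ (r²/(-r'))(∇̃ψ)²`.
Integrating over `[a, u₁]` and letting `a → u_I⁺`, the boundary term `r(a)ψ(a)²` vanishes.
-/

theorem twisted_hardy_pointwise {κ r r' ψ ψ' : ℝ} (hκ : κ < 1) (hr : 0 < r) (hr' : r' < 0) :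
    (1 - κ) * (-r' * ψ ^ 2) ≤ r' * ψ ^ 2 + 2 * r * ψ * ψ'
      + 1 / (1 - κ) * (r ^ 2 / -r' * (ψ' - (-3 / 2 + κ) * (r' / r) * ψ) ^ 2) := by
  set D := ψ' - (-3 / 2 + κ) * (r' / r) * ψ with hD
  have hc : 0 < 1 - κ := sub_pos.2 hκ
  have product_rule : r' * ψ ^ 2 + 2 * r * ψ * ψ'
      = 2 * (1 - κ) * (-r' * ψ ^ 2) + 2 * r * ψ * D := by
    rw [hD]
    field_simp
    ring
  have amgm : 0 ≤ ((1 - κ) * -r' * ψ + r * D) ^ 2 / ((1 - κ) * -r') :=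
    div_nonneg (sq_nonneg _) (mul_pos hc (neg_pos.2 hr')).le
  have expand : ((1 - κ) * -r' * ψ + r * D) ^ 2 / ((1 - κ) * -r')
      = (1 - κ) * (-r' * ψ ^ 2) + 2 * r * ψ * D + 1 / (1 - κ) * (r ^ 2 / -r' * D ^ 2) := by
    have : r' ≠ 0 := hr'.ne
    field_simp
    ring
  linarith

theorem twisted_hardy_Icc {κ a b : ℝ} (hκ : κ < 1) (hab : a ≤ b) {r ψ r' ψ' : ℝ → ℝ}
    (hr : ∀ u ∈ Icc a b, HasDerivWithinAt r (r' u) (Icc a b) u)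
    (hr'c : ContinuousOn r' (Icc a b))
    (hrpos : ∀ u ∈ Icc a b, 0 < r u) (hr'neg : ∀ u ∈ Icc a b, r' u < 0)
    (hψ : ∀ u ∈ Icc a b, HasDerivWithinAt ψ (ψ' u) (Icc a b) u)
    (hψ'c : ContinuousOn ψ' (Icc a b)) :
    (1 - κ) * ∫ u in a..b, -r' u * ψ u ^ 2
      ≤ r b * ψ b ^ 2 - r a * ψ a ^ 2
        + 1 / (1 - κ) * ∫ u in a..b,
            r u ^ 2 / -r' u * (ψ' u - (-3 / 2 + κ) * (r' u / r u) * ψ u) ^ 2 := by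
  have hrc : ContinuousOn r (Icc a b) := fun u hu => (hr u hu).continuousWithinAt
  have hψc : ContinuousOn ψ (Icc a b) := fun u hu => (hψ u hu).continuousWithinAt
  have hint_sq : IntervalIntegrable (fun u => -r' u * ψ u ^ 2) volume a b :=
    (hr'c.neg.mul (hψc.pow 2)).intervalIntegrable_of_Icc hab
  have hint_deriv : IntervalIntegrable (fun u => r' u * ψ u ^ 2 + 2 * r u * ψ u * ψ' u)
      volume a b :=
    ((hr'c.mul (hψc.pow 2)).add (((continuousOn_const.mul hrc).mul hψc).mul hψ'c))
      |>.intervalIntegrable_of_Icc hab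
  have hint_twisted : IntervalIntegrable
      (fun u => r u ^ 2 / -r' u * (ψ' u - (-3 / 2 + κ) * (r' u / r u) * ψ u) ^ 2) volume a b :=
    ((hrc.pow 2).div hr'c.neg (fun u hu => (neg_pos.2 (hr'neg u hu)).ne')).mul
      ((hψ'c.sub ((continuousOn_const.mul
        (hr'c.div hrc (fun u hu => (hrpos u hu).ne'))).mul hψc)).pow 2)
      |>.intervalIntegrable_of_Icc hab
  have ftc : ∫ u in a..b, (r' u * ψ u ^ 2 + 2 * r u * ψ u * ψ' u)
      = r b * ψ b ^ 2 - r a * ψ a ^ 2 := by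
    refine integral_eq_sub_of_hasDerivAt_of_le hab (hrc.mul (hψc.pow 2)) (fun u hu => ?_)
      hint_deriv
    have hnhds : Icc a b ∈ 𝓝 u := Icc_mem_nhds hu.1 hu.2
    refine (((hr u (Ioo_subset_Icc_self hu)).hasDerivAt hnhds).mul
      (((hψ u (Ioo_subset_Icc_self hu)).hasDerivAt hnhds).fun_pow 2)).congr_deriv ?_
    norm_num
    ring
  calc (1 - κ) * ∫ u in a..b, -r' u * ψ u ^ 2
      = ∫ u in a..b, (1 - κ) * (-r' u * ψ u ^ 2) := (intervalIntegral.integral_const_mul _ _).symm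
    _ ≤ ∫ u in a..b, ((r' u * ψ u ^ 2 + 2 * r u * ψ u * ψ' u) + 1 / (1 - κ) *
          (r u ^ 2 / -r' u * (ψ' u - (-3 / 2 + κ) * (r' u / r u) * ψ u) ^ 2)) :=
        integral_mono_on hab (hint_sq.const_mul _) (hint_deriv.add (hint_twisted.const_mul _))
          fun u hu => twisted_hardy_pointwise hκ (hrpos u hu) (hr'neg u hu)
    _ = _ := by rw [integral_add hint_deriv (hint_twisted.const_mul _),
      intervalIntegral.integral_const_mul, ftc]

theorem intervalIntegral.tendsto_integral_nhdsGT_left {f : ℝ → ℝ} {a b : ℝ} (hab : a < b)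
    (hf : IntervalIntegrable f volume a b) :
    Tendsto (fun x => ∫ u in x..b, f u) (𝓝[>] a) (𝓝 (∫ u in a..b, f u)) := by
  have hf' : IntegrableOn f (uIcc a b) := by
    rw [uIcc_of_le hab.le, integrableOn_Icc_iff_integrableOn_Ioc]
    exact hf.1
  have hcont := continuousOn_primitive_interval_left hf' a left_mem_uIcc
  rw [uIcc_of_le hab.le] at hcont
  exact hcont.mono_of_mem_nhdsWithin (Icc_mem_nhdsGT hab)

theorem stmt_10_general (κ g : ℝ) (hκ : κ ∈ Set.Ioo (0 : ℝ) 1) (hg : g = -3 / 2 + κ)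
    (uI u₁ : ℝ) (huI : uI < u₁)
    (r ψ r' ψ' : ℝ → ℝ)
    (hr : ∀ u ∈ Set.Ioc uI u₁, HasDerivWithinAt r (r' u) (Set.Ioc uI u₁) u)
    (hr'c : ContinuousOn r' (Set.Ioc uI u₁))
    (hrpos : ∀ u ∈ Set.Ioc uI u₁, 0 < r u)
    (hr'neg : ∀ u ∈ Set.Ioc uI u₁, r' u < 0)
    (hψ : ∀ u ∈ Set.Ioc uI u₁, HasDerivWithinAt ψ (ψ' u) (Set.Ioc uI u₁) u)
    (hψ'c : ContinuousOn ψ' (Set.Ioc uI u₁))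
    (hlim : Filter.Tendsto (fun u => r u * (ψ u) ^ 2) (nhdsWithin uI (Set.Ioi uI))
      (nhds 0))
    (hint1 : MeasureTheory.IntegrableOn (fun u => (-(r' u)) * (ψ u) ^ 2)
      (Set.Ioc uI u₁))
    (hint2 : MeasureTheory.IntegrableOn
      (fun u => (r u) ^ 2 / (-(r' u)) * (ψ' u - g * (r' u / r u) * ψ u) ^ 2)
      (Set.Ioc uI u₁)) :
    ∫ u in Set.Ioc uI u₁, (-(r' u)) * (ψ u) ^ 2
      ≤ r u₁ * (ψ u₁) ^ 2 / (1 - κ)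
        + (1 / (1 - κ) ^ 2)
            * ∫ u in Set.Ioc uI u₁,
                (r u) ^ 2 / (-(r' u)) * (ψ' u - g * (r' u / r u) * ψ u) ^ 2 := by
  subst hg
  have hc : 0 < 1 - κ := sub_pos.2 hκ.2
  rw [← intervalIntegrable_iff_integrableOn_Ioc_of_le huI.le] at hint1 hint2
  rw [← integral_of_le huI.le, ← integral_of_le huI.le]
  have truncated : ∀ a ∈ Ioo uI u₁, (1 - κ) * ∫ u in a..u₁, -r' u * ψ u ^ 2
      ≤ r u₁ * ψ u₁ ^ 2 - r a * ψ a ^ 2 + 1 / (1 - κ) * ∫ u in a..u₁,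
          r u ^ 2 / -r' u * (ψ' u - (-3 / 2 + κ) * (r' u / r u) * ψ u) ^ 2 := by
    intro a ha
    have hsub : Icc a u₁ ⊆ Ioc uI u₁ := Icc_subset_Ioc_iff ha.2.le |>.2 ⟨ha.1, le_rfl⟩
    exact twisted_hardy_Icc hκ.2 ha.2.le (fun u hu => (hr u (hsub hu)).mono hsub)
      (hr'c.mono hsub) (fun u hu => hrpos u (hsub hu)) (fun u hu => hr'neg u (hsub hu))
      (fun u hu => (hψ u (hsub hu)).mono hsub) (hψ'c.mono hsub)
  have limit := le_of_tendsto_of_tendsto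
    ((tendsto_integral_nhdsGT_left huI hint1).const_mul (1 - κ))
    (((tendsto_const_nhds.sub hlim).add
      ((tendsto_integral_nhdsGT_left huI hint2).const_mul (1 / (1 - κ)))))
    (eventually_of_mem (Ioo_mem_nhdsGT huI) truncated)
  rw [sub_zero] at limit
  calc _ ≤ _ := (le_div_iff₀' hc).2 limit
    _ = _ := by rw [add_div, mul_div_right_comm (1 / (1 - κ)), div_div, ← sq]

/-- Hardy inequality along an ingoing null ray reaching infinity: with
`g = −3/2 + κ` and twisted derivative `∇̃ψ = ψ' − g(r'/r)ψ`,
`∫ (−r')ψ² ≤ r(u₁)ψ(u₁)²/(1−κ) + (1−κ)⁻² ∫ (r²/(−r'))(∇̃ψ)²`. -/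
theorem stmt_10 (κ g : ℝ) (hκ : κ ∈ Set.Ioo (0 : ℝ) 1) (hg : g = -3 / 2 + κ)
    (uI u₁ : ℝ) (huI : uI < u₁)
    (r ψ r' ψ' : ℝ → ℝ)
    (hr : ∀ u ∈ Set.Ioc uI u₁, HasDerivWithinAt r (r' u) (Set.Ioc uI u₁) u)
    (hr'c : ContinuousOn r' (Set.Ioc uI u₁))
    (hrpos : ∀ u ∈ Set.Ioc uI u₁, 0 < r u)
    (hr'neg : ∀ u ∈ Set.Ioc uI u₁, r' u < 0)
    (hrtop : Filter.Tendsto r (nhdsWithin uI (Set.Ioi uI)) Filter.atTop)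
    (hψ : ∀ u ∈ Set.Ioc uI u₁, HasDerivWithinAt ψ (ψ' u) (Set.Ioc uI u₁) u)
    (hψ'c : ContinuousOn ψ' (Set.Ioc uI u₁))
    (hlim : Filter.Tendsto (fun u => r u * (ψ u) ^ 2) (nhdsWithin uI (Set.Ioi uI))
      (nhds 0))
    (hint1 : MeasureTheory.IntegrableOn (fun u => (-(r' u)) * (ψ u) ^ 2)
      (Set.Ioc uI u₁))
    (hint2 : MeasureTheory.IntegrableOn
      (fun u => (r u) ^ 2 / (-(r' u)) * (ψ' u - g * (r' u / r u) * ψ u) ^ 2)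
      (Set.Ioc uI u₁)) :
    ∫ u in Set.Ioc uI u₁, (-(r' u)) * (ψ u) ^ 2
      ≤ r u₁ * (ψ u₁) ^ 2 / (1 - κ)
        + (1 / (1 - κ) ^ 2)
            * ∫ u in Set.Ioc uI u₁,
                (r u) ^ 2 / (-(r' u)) * (ψ' u - g * (r' u / r u) * ψ u) ^ 2 :=
  stmt_10_general κ g hκ hg uI u₁ huI r ψ r' ψ' hr hr'c hrpos hr'neg hψ hψ'c hlim hint1 hint2
end

section
/- Let κ ∈ (0,1) and g = −3/2 + κ. Let v₀ < v₁, let r : [v₀, v₁] → (0,∞) be continuously differentiable with r'(v) > 0 for all v, and let ψ : [v₀, v₁] → ℝ be continuously differentiable. Define the twisted derivative ∇̃ψ = ψ' − g(r'/r)ψ. Then ∫_{v₀}^{v₁} r'(v)ψ(v)² dv ≤ r(v₀)ψ(v₀)²/(1−κ) + (1−κ)^{−2} ∫_{v₀}^{v₁} (r(v)²/r'(v))(∇̃ψ(v))² dv. -/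
/-!
Writing `a = r ψ'` and `b = r' ψ`, so that `r ∇̃ψ = a + (3/2 - κ) b`, one has the identity
`(a + (3/2 - κ) b)² - (1 - κ) ((2 - κ) b² + 2ab) = (a + b/2)²`. Dividing by `(1 - κ) r'` gives the
pointwise bound `(1 - κ) r' ψ² + (r ψ²)' ≤ (1 - κ)⁻¹ (r² / r') (∇̃ψ)²`. Integrating, the total
derivative contributes `r ψ²` at `v₁`, which is nonnegative and dropped, minus the value at `v₀`.
-/

open Set MeasureTheory

theorem mul_integral_le_add_integral_of_hasDerivWithinAt {a b c : ℝ} {F F' P Q : ℝ → ℝ}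
    (hab : a ≤ b) (hF : ∀ x ∈ Icc a b, HasDerivWithinAt F (F' x) (Icc a b) x)
    (hP : IntegrableOn P (Icc a b)) (hQ : IntegrableOn Q (Icc a b)) (hFb : 0 ≤ F b)
    (h : ∀ x ∈ Ioo a b, c * P x + F' x ≤ Q x) :
    c * ∫ x in a..b, P x ≤ F a + ∫ x in a..b, Q x := by
  have hPi : IntervalIntegrable P volume a b :=
    (intervalIntegrable_iff_integrableOn_Icc_of_le hab).2 hP
  have hQi : IntervalIntegrable Q volume a b :=
    (intervalIntegrable_iff_integrableOn_Icc_of_le hab).2 hQ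
  have hFTC : F b - F a ≤ ∫ x in a..b, (Q x - c * P x) :=
    intervalIntegral.sub_le_integral_of_hasDeriv_right_of_le hab
      (fun x hx => (hF x hx).continuousWithinAt)
      (fun x hx => (hF x (Ioo_subset_Icc_self hx)).mono_of_mem_nhdsWithin
        (Icc_mem_nhdsGT_of_mem ⟨hx.1.le, hx.2⟩))
      (hQ.sub (hP.const_mul c)) (fun x hx => by linarith [h x hx])
  rw [intervalIntegral.integral_sub hQi (hPi.const_mul c),
    intervalIntegral.integral_const_mul] at hFTC
  linarith

theorem HasDerivWithinAt.mul_sq {r ψ : ℝ → ℝ} {r' ψ' x : ℝ} {s : Set ℝ}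
    (hr : HasDerivWithinAt r r' s x) (hψ : HasDerivWithinAt ψ ψ' s x) :
    HasDerivWithinAt (fun y => r y * ψ y ^ 2) (r' * ψ x ^ 2 + 2 * r x * ψ x * ψ') s x :=
  (hr.fun_mul (hψ.fun_pow 2)).congr_deriv (by push_cast; ring)

theorem hardy_integrand_le {κ r r' ψ ψ' : ℝ} (hκ : κ < 1) (hr : r ≠ 0) (hr' : 0 < r') :
    (1 - κ) * (r' * ψ ^ 2) + (r' * ψ ^ 2 + 2 * r * ψ * ψ')
      ≤ 1 / (1 - κ) * (r ^ 2 / r' * (ψ' - (-3 / 2 + κ) * (r' / r) * ψ) ^ 2) := by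
  have hk : 0 < 1 - κ := by linarith
  have htwist : r ^ 2 / r' * (ψ' - (-3 / 2 + κ) * (r' / r) * ψ) ^ 2
      = (r * ψ' + (3 / 2 - κ) * (r' * ψ)) ^ 2 / r' := by
    field_simp
    ring
  have hsq : (r * ψ' + (3 / 2 - κ) * (r' * ψ)) ^ 2
      - (1 - κ) * ((2 - κ) * (r' * ψ) ^ 2 + 2 * (r * ψ') * (r' * ψ))
      = (r * ψ' + r' * ψ / 2) ^ 2 := by
    ring
  rw [htwist, div_mul_div_comm, le_div_iff₀ (by positivity)]
  nlinarith [sq_nonneg (r * ψ' + r' * ψ / 2)]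

/-- Hardy estimate in `v` along an outgoing null ray: with `g = −3/2 + κ` and
twisted derivative `∇̃ψ = ψ' − g(r'/r)ψ`,
`∫ r'ψ² ≤ r(v₀)ψ(v₀)²/(1−κ) + (1−κ)⁻² ∫ (r²/r')(∇̃ψ)²`. -/
theorem stmt_11 (κ g : ℝ) (hκ : κ ∈ Set.Ioo (0 : ℝ) 1) (hg : g = -3 / 2 + κ)
    (v₀ v₁ : ℝ) (hv : v₀ < v₁)
    (r ψ r' ψ' : ℝ → ℝ)
    (hr : ∀ v ∈ Set.Icc v₀ v₁, HasDerivWithinAt r (r' v) (Set.Icc v₀ v₁) v)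
    (hr'c : ContinuousOn r' (Set.Icc v₀ v₁))
    (hrpos : ∀ v ∈ Set.Icc v₀ v₁, 0 < r v)
    (hr'pos : ∀ v ∈ Set.Icc v₀ v₁, 0 < r' v)
    (hψ : ∀ v ∈ Set.Icc v₀ v₁, HasDerivWithinAt ψ (ψ' v) (Set.Icc v₀ v₁) v)
    (hψ'c : ContinuousOn ψ' (Set.Icc v₀ v₁)) :
    ∫ v in v₀..v₁, r' v * (ψ v) ^ 2
      ≤ r v₀ * (ψ v₀) ^ 2 / (1 - κ)
        + (1 / (1 - κ) ^ 2)
            * ∫ v in v₀..v₁, (r v) ^ 2 / r' v * (ψ' v - g * (r' v / r v) * ψ v) ^ 2 := by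
  subst hg
  have hk : 0 < 1 - κ := by linarith [hκ.2]
  have hrc : ContinuousOn r (Icc v₀ v₁) := fun v hvI => (hr v hvI).continuousWithinAt
  have hψc : ContinuousOn ψ (Icc v₀ v₁) := fun v hvI => (hψ v hvI).continuousWithinAt
  have hQc : ContinuousOn
      (fun v => r v ^ 2 / r' v * (ψ' v - (-3 / 2 + κ) * (r' v / r v) * ψ v) ^ 2) (Icc v₀ v₁) :=
    ((hrc.pow 2).div hr'c fun v hvI => (hr'pos v hvI).ne').mul <| (hψ'c.sub <|
      (continuousOn_const.mul (hr'c.div hrc fun v hvI => (hrpos v hvI).ne')).mul hψc).pow 2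
  have key := mul_integral_le_add_integral_of_hasDerivWithinAt (P := fun v => r' v * ψ v ^ 2)
    hv.le (fun v hvI => (hr v hvI).mul_sq (hψ v hvI)) (hr'c.mul (hψc.pow 2)).integrableOn_Icc
    (hQc.const_mul (1 / (1 - κ))).integrableOn_Icc
    (mul_nonneg (hrpos v₁ (right_mem_Icc.2 hv.le)).le (sq_nonneg _))
    (fun v hvI => hardy_integrand_le hκ.2 (hrpos v (Ioo_subset_Icc_self hvI)).ne'
      (hr'pos v (Ioo_subset_Icc_self hvI)))
  rw [intervalIntegral.integral_const_mul] at key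
  rw [← mul_le_mul_iff_right₀ hk]
  refine key.trans_eq ?_
  rw [mul_add, mul_div_cancel₀ _ hk.ne', ← mul_assoc]
  congr 2
  field_simp
end

section
/- Let κ ∈ (0,1), g = −3/2 + κ, and C₀ > 0. Let u_I < u_H, let r : (u_I, u_H] → (0,∞) be continuously differentiable with r'(u) < 0, r(u) → ∞ as u → u_I⁺, and −r'(u) ≥ r(u)²/C₀ for all u, and let ψ : (u_I, u_H] → ℝ be continuously differentiable. Then there exists a constant C > 0, depending only on κ, C₀, r(u_H), and u_H − u_I, such that for every u ∈ (u_I, u_H]: |r(u)^{3/2−κ}ψ(u)| ≤ C·[ ( ∫_{u_I}^{u_H} (r⁴/(−r'))(∇̃ψ)² du' )^{1/2} + ( ∫_{u_I}^{u_H} (−r')ψ² du' )^{1/2} ], where ∇̃ψ = ψ' − g(r'/r)ψ. -/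
/-!
Put `φ = r^(-g) ψ`, so that `φ' = r^(-g) ∇̃ψ`, and recall `g = -3/2 + κ ∈ (-3/2, -1/2)`.
Cauchy–Schwarz against the weight `-r' r^(-2g-4)`, whose integral over `[x, u_H]` is at most
`A^(-(2g+3)) / (2g+3)`, bounds the oscillation of `φ` by the twisted energy. Since `r → ∞` at
`u_I`, some `w` has `r w ≥ 2A`; on `[w, u_H]` the weighted `L²` norm dominates
`min φ² · ∫ -r' r^(2g)`, and that integral is at least `(A^(2g+1) - (2A)^(2g+1)) / -(2g+1)`.
So `φ` is small at one point, hence everywhere.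
-/

open MeasureTheory Set Filter

theorem integral_sqrt_mul_le {α : Type*} [MeasurableSpace α] {μ : Measure α} {f g : α → ℝ}
    (hf : Integrable f μ) (hg : Integrable g μ) (hf0 : 0 ≤ᵐ[μ] f) (hg0 : 0 ≤ᵐ[μ] g) :
    ∫ x, √(f x * g x) ∂μ ≤ √(∫ x, f x ∂μ) * √(∫ x, g x ∂μ) := by
  have hL2 : ∀ {h : α → ℝ}, Integrable h μ → 0 ≤ᵐ[μ] h →
      MemLp (fun x => √(h x)) (ENNReal.ofReal 2) μ ∧
        ∫ x, √(h x) ^ (2 : ℝ) ∂μ = ∫ x, h x ∂μ := by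
    intro h hh hh0
    have hsq : (fun x => √(h x) ^ 2) =ᵐ[μ] h := by
      filter_upwards [hh0] with x hx using Real.sq_sqrt hx
    refine ⟨?_, integral_congr_ae (by simpa only [Real.rpow_two] using hsq)⟩
    rw [ENNReal.ofReal_ofNat, memLp_two_iff_integrable_sq
      (Real.continuous_sqrt.comp_aestronglyMeasurable hh.aestronglyMeasurable)]
    exact hh.congr hsq.symm
  obtain ⟨hfL2, hf2⟩ := hL2 hf hf0
  obtain ⟨hgL2, hg2⟩ := hL2 hg hg0
  have holder := integral_mul_le_Lp_mul_Lq_of_nonneg Real.HolderConjugate.two_two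
    (Eventually.of_forall fun x => Real.sqrt_nonneg (f x))
    (Eventually.of_forall fun x => Real.sqrt_nonneg (g x)) hfL2 hgL2
  rw [hf2, hg2, ← Real.sqrt_eq_rpow, ← Real.sqrt_eq_rpow] at holder
  refine le_of_eq_of_le (integral_congr_ae ?_) holder
  filter_upwards [hf0] with x hx using Real.sqrt_mul hx _

theorem exists_mul_setIntegral_Ioc_le_setIntegral_mul {f h : ℝ → ℝ} {a b : ℝ}
    (hab : a ≤ b) (hf : ContinuousOn f (Icc a b)) (hh : ContinuousOn h (Icc a b))
    (hh0 : ∀ t ∈ Ioc a b, 0 ≤ h t) :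
    ∃ v ∈ Icc a b, f v * ∫ t in Ioc a b, h t ≤ ∫ t in Ioc a b, f t * h t := by
  obtain ⟨v, hv, hmin⟩ := isCompact_Icc.exists_isMinOn (nonempty_Icc.2 hab) hf
  refine ⟨v, hv, ?_⟩
  rw [← integral_const_mul]
  refine setIntegral_mono_on ?_ ?_ measurableSet_Ioc fun t ht =>
    mul_le_mul_of_nonneg_right (hmin (Ioc_subset_Icc_self ht)) (hh0 t ht)
  · exact ((continuousOn_const.mul hh).integrableOn_Icc).mono_set Ioc_subset_Icc_self
  · exact ((hf.mul hh).integrableOn_Icc).mono_set Ioc_subset_Icc_self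

theorem integral_Ioc_eq_sub_of_hasDerivWithinAt_Ioc {a b x y : ℝ} {F f : ℝ → ℝ}
    (hF : ∀ t ∈ Ioc a b, HasDerivWithinAt F (f t) (Ioc a b) t) (hf : ContinuousOn f (Ioc a b))
    (hx : a < x) (hxy : x ≤ y) (hy : y ≤ b) :
    ∫ t in Ioc x y, f t = F y - F x := by
  have hsub : Icc x y ⊆ Ioc a b := Icc_subset_Ioc hx hy
  rw [← intervalIntegral.integral_of_le hxy]
  refine intervalIntegral.integral_eq_sub_of_hasDerivAt_of_le hxy
    (fun t ht => (hF t (hsub ht)).continuousWithinAt.mono hsub) (fun t ht => ?_)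
    ((hf.mono hsub).intervalIntegrable_of_Icc hxy)
  exact (hF t (hsub (Ioo_subset_Icc_self ht))).hasDerivAt
    (mem_of_superset (Ioo_mem_nhds (hx.trans ht.1) (ht.2.trans_le hy)) Ioo_subset_Ioc_self)

theorem abs_sub_le_setIntegral_abs_of_hasDerivWithinAt_Ioc {a b x y z : ℝ} {F f : ℝ → ℝ}
    (hF : ∀ t ∈ Ioc a b, HasDerivWithinAt F (f t) (Ioc a b) t) (hf : ContinuousOn f (Ioc a b))
    (hx : a < x) (hy : y ∈ Icc x b) (hz : z ∈ Icc x b) :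
    |F z - F y| ≤ ∫ t in Ioc x b, |f t| := by
  wlog hyz : y ≤ z generalizing y z
  · rw [abs_sub_comm]; exact this hz hy (le_of_not_ge hyz)
  rw [← integral_Ioc_eq_sub_of_hasDerivWithinAt_Ioc hF hf (hx.trans_le hy.1) hyz hz.2]
  refine abs_integral_le_integral_abs.trans (setIntegral_mono_set ?_ ?_ ?_)
  · exact ((hf.mono (Icc_subset_Ioc hx le_rfl)).abs.integrableOn_Icc).mono_set Ioc_subset_Icc_self
  · exact Eventually.of_forall fun t => abs_nonneg _
  · exact (Ioc_subset_Ioc hy.1 hz.2).eventuallyLE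

theorem integral_Ioc_neg_mul_rpow {a b x p : ℝ} {r r' : ℝ → ℝ}
    (hr : ∀ t ∈ Ioc a b, HasDerivWithinAt r (r' t) (Ioc a b) t)
    (hr' : ContinuousOn r' (Ioc a b))
    (hpos : ∀ t ∈ Ioc a b, 0 < r t) (hp : p ≠ -1) (hx : x ∈ Ioc a b) :
    ∫ t in Ioc x b, -r' t * r t ^ p = (r x ^ (p + 1) - r b ^ (p + 1)) / (p + 1) := by
  have hp' : p + 1 ≠ 0 := fun h => hp (by linarith)
  have hrc : ContinuousOn r (Ioc a b) := fun t ht => (hr t ht).continuousWithinAt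
  have hderiv : ∀ t ∈ Ioc a b, HasDerivWithinAt (fun t => -(r t ^ (p + 1) / (p + 1)))
      (-r' t * r t ^ p) (Ioc a b) t := fun t ht =>
    (((hr t ht).rpow_const (Or.inl (hpos t ht).ne')).div_const _).neg.congr_deriv
      (by field_simp; ring_nf)
  rw [integral_Ioc_eq_sub_of_hasDerivWithinAt_Ioc hderiv
    (hr'.neg.mul (hrc.rpow_const fun t ht => Or.inl (hpos t ht).ne')) hx.1 hx.2 le_rfl]
  ring

theorem setIntegral_Ioc_neg_mul_rpow_le {a b x p : ℝ} {r r' : ℝ → ℝ}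
    (hr : ∀ t ∈ Ioc a b, HasDerivWithinAt r (r' t) (Ioc a b) t)
    (hr' : ContinuousOn r' (Ioc a b))
    (hpos : ∀ t ∈ Ioc a b, 0 < r t) (hp : p < -1) (hx : x ∈ Ioc a b) :
    ∫ t in Ioc x b, -r' t * r t ^ p ≤ r b ^ (p + 1) / -(p + 1) := by
  rw [integral_Ioc_neg_mul_rpow hr hr' hpos hp.ne hx, ← neg_div_neg_eq, neg_sub]
  exact div_le_div_of_nonneg_right (sub_le_self _ (Real.rpow_nonneg (hpos x hx).le _))
    (by linarith)

theorem le_setIntegral_Ioc_neg_mul_rpow {a b x p R : ℝ} {r r' : ℝ → ℝ}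
    (hr : ∀ t ∈ Ioc a b, HasDerivWithinAt r (r' t) (Ioc a b) t)
    (hr' : ContinuousOn r' (Ioc a b))
    (hpos : ∀ t ∈ Ioc a b, 0 < r t) (hp : p < -1) (hx : x ∈ Ioc a b) (hR : 0 < R)
    (hRx : R ≤ r x) :
    (r b ^ (p + 1) - R ^ (p + 1)) / -(p + 1) ≤ ∫ t in Ioc x b, -r' t * r t ^ p := by
  rw [integral_Ioc_neg_mul_rpow hr hr' hpos hp.ne hx, ← neg_div_neg_eq (r x ^ (p + 1) - _),
    neg_sub]
  refine div_le_div_of_nonneg_right ?_ (by linarith)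
  linarith [Real.rpow_le_rpow_of_nonpos hR hRx (by linarith : p + 1 ≤ 0)]

theorem hasDerivWithinAt_rpow_neg_mul {s : Set ℝ} {r ψ : ℝ → ℝ} {r' ψ' g t : ℝ}
    (hr : HasDerivWithinAt r r' s t) (hψ : HasDerivWithinAt ψ ψ' s t) (hpos : 0 < r t) :
    HasDerivWithinAt (fun u => r u ^ (-g) * ψ u) (r t ^ (-g) * (ψ' - g * (r' / r t) * ψ t))
      s t := by
  refine ((hr.rpow_const (Or.inl hpos.ne')).mul hψ).congr_deriv ?_
  rw [Real.rpow_sub hpos, Real.rpow_one]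
  field_simp
  ring

theorem abs_rpow_neg_mul_eq_sqrt {R R' D g : ℝ} (hR : 0 < R) (hR' : R' ≠ 0) :
    |R ^ (-g) * D| = √(R ^ 4 / -R' * D ^ 2 * (-R' * R ^ (-2 * g - 4))) := by
  have hpow : R ^ 4 * R ^ (-2 * g - 4) = (R ^ (-g)) ^ 2 := by
    rw [← Real.rpow_natCast, ← Real.rpow_add hR, ← Real.rpow_natCast, ← Real.rpow_mul hR.le]
    norm_num; ring_nf
  rw [← Real.sqrt_sq_eq_abs]
  congr 1
  rw [mul_pow, ← hpow]
  field_simp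

theorem abs_sub_rpow_neg_mul_le {a b x y z g : ℝ} {r r' ψ ψ' : ℝ → ℝ}
    (hr : ∀ t ∈ Ioc a b, HasDerivWithinAt r (r' t) (Ioc a b) t)
    (hr' : ContinuousOn r' (Ioc a b))
    (hpos : ∀ t ∈ Ioc a b, 0 < r t) (hr'neg : ∀ t ∈ Ioc a b, r' t < 0)
    (hψ : ∀ t ∈ Ioc a b, HasDerivWithinAt ψ (ψ' t) (Ioc a b) t)
    (hψ' : ContinuousOn ψ' (Ioc a b))
    (hE : IntegrableOn (fun t => r t ^ 4 / -r' t * (ψ' t - g * (r' t / r t) * ψ t) ^ 2)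
      (Ioc a b))
    (hg : -3 / 2 < g) (hx : a < x) (hy : y ∈ Icc x b) (hz : z ∈ Icc x b) :
    |r z ^ (-g) * ψ z - r y ^ (-g) * ψ y| ≤
      √(∫ t in Ioc a b, r t ^ 4 / -r' t * (ψ' t - g * (r' t / r t) * ψ t) ^ 2) *
        √(r b ^ (-(2 * g + 3)) / (2 * g + 3)) := by
  have hxS : x ∈ Ioc a b := ⟨hx, hy.1.trans hy.2⟩
  have hsub : Icc x b ⊆ Ioc a b := Icc_subset_Ioc hx le_rfl
  have hrc : ContinuousOn r (Ioc a b) := fun t ht => (hr t ht).continuousWithinAt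
  have hψc : ContinuousOn ψ (Ioc a b) := fun t ht => (hψ t ht).continuousWithinAt
  have hrpow : ∀ p : ℝ, ContinuousOn (fun t => r t ^ p) (Ioc a b) := fun p =>
    hrc.rpow_const fun t ht => Or.inl (hpos t ht).ne'
  have hDc : ContinuousOn (fun t => ψ' t - g * (r' t / r t) * ψ t) (Ioc a b) :=
    hψ'.sub ((continuousOn_const.mul (hr'.div hrc fun t ht => (hpos t ht).ne')).mul hψc)
  have hw : IntegrableOn (fun t => -r' t * r t ^ (-2 * g - 4)) (Ioc x b) :=
    ((hr'.neg.mul (hrpow _)).mono hsub).integrableOn_Icc.mono_set Ioc_subset_Icc_self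
  have hwint :
      ∫ t in Ioc x b, -r' t * r t ^ (-2 * g - 4) ≤ r b ^ (-(2 * g + 3)) / (2 * g + 3) :=
    (setIntegral_Ioc_neg_mul_rpow_le hr hr' hpos (by linarith) hxS).trans_eq (by ring_nf)
  have hEnn : ∀ t ∈ Ioc a b, 0 ≤ r t ^ 4 / -r' t * (ψ' t - g * (r' t / r t) * ψ t) ^ 2 :=
    fun t ht => mul_nonneg (div_nonneg (pow_nonneg (hpos t ht).le 4)
      (neg_nonneg.2 (hr'neg t ht).le)) (sq_nonneg _)
  calc |r z ^ (-g) * ψ z - r y ^ (-g) * ψ y|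
      ≤ ∫ t in Ioc x b, |r t ^ (-g) * (ψ' t - g * (r' t / r t) * ψ t)| :=
        abs_sub_le_setIntegral_abs_of_hasDerivWithinAt_Ioc
          (fun t ht => hasDerivWithinAt_rpow_neg_mul (hr t ht) (hψ t ht) (hpos t ht))
          ((hrpow _).mul hDc) hx hy hz
    _ = ∫ t in Ioc x b, √(r t ^ 4 / -r' t * (ψ' t - g * (r' t / r t) * ψ t) ^ 2 *
          (-r' t * r t ^ (-2 * g - 4))) :=
        setIntegral_congr_fun measurableSet_Ioc fun t ht =>
          abs_rpow_neg_mul_eq_sqrt (hpos t (hsub (Ioc_subset_Icc_self ht)))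
            (hr'neg t (hsub (Ioc_subset_Icc_self ht))).ne
    _ ≤ √(∫ t in Ioc x b, r t ^ 4 / -r' t * (ψ' t - g * (r' t / r t) * ψ t) ^ 2) *
          √(∫ t in Ioc x b, -r' t * r t ^ (-2 * g - 4)) := by
        refine integral_sqrt_mul_le (hE.mono_set (Ioc_subset_Ioc_left hx.le)) hw ?_ ?_ <;>
          filter_upwards [ae_restrict_mem measurableSet_Ioc] with t ht
        · exact hEnn t (Ioc_subset_Ioc_left hx.le ht)
        · exact mul_nonneg (neg_nonneg.2 (hr'neg t (hsub (Ioc_subset_Icc_self ht))).le)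
            (Real.rpow_nonneg (hpos t (hsub (Ioc_subset_Icc_self ht))).le _)
    _ ≤ _ := by
        gcongr
        filter_upwards [ae_restrict_mem measurableSet_Ioc] with t ht using hEnn t ht

theorem rpow_neg_mul_sq_mul_rpow {R P g : ℝ} (hR : 0 < R) (R' : ℝ) :
    (R ^ (-g) * P) ^ 2 * (-R' * R ^ (2 * g)) = -R' * P ^ 2 := by
  have hpow : (R ^ (-g)) ^ 2 * R ^ (2 * g) = 1 := by
    rw [← Real.rpow_natCast, ← Real.rpow_mul hR.le, ← Real.rpow_add hR]
    convert Real.rpow_zero R using 2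
    push_cast
    ring
  linear_combination (-R' * P ^ 2) * hpow

theorem exists_sq_rpow_neg_mul_le {a b w R g : ℝ} {r r' ψ : ℝ → ℝ}
    (hr : ∀ t ∈ Ioc a b, HasDerivWithinAt r (r' t) (Ioc a b) t)
    (hr' : ContinuousOn r' (Ioc a b))
    (hpos : ∀ t ∈ Ioc a b, 0 < r t) (hr'neg : ∀ t ∈ Ioc a b, r' t < 0)
    (hψ : ContinuousOn ψ (Ioc a b)) (hL2 : IntegrableOn (fun t => -r' t * ψ t ^ 2) (Ioc a b))
    (hg : g < -1 / 2) (hw : w ∈ Ioc a b) (hR : 0 < R) (hRw : R ≤ r w) :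
    ∃ v ∈ Icc w b,
      (r v ^ (-g) * ψ v) ^ 2 * ((r b ^ (2 * g + 1) - R ^ (2 * g + 1)) / -(2 * g + 1)) ≤
        ∫ t in Ioc a b, -r' t * ψ t ^ 2 := by
  have hsub : Icc w b ⊆ Ioc a b := Icc_subset_Ioc hw.1 le_rfl
  have hrc : ContinuousOn r (Ioc a b) := fun t ht => (hr t ht).continuousWithinAt
  have hrpow : ∀ p : ℝ, ContinuousOn (fun t => r t ^ p) (Ioc a b) := fun p =>
    hrc.rpow_const fun t ht => Or.inl (hpos t ht).ne'
  obtain ⟨v, hv, hmean⟩ := exists_mul_setIntegral_Ioc_le_setIntegral_mul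
    (f := fun t => (r t ^ (-g) * ψ t) ^ 2) (h := fun t => -r' t * r t ^ (2 * g)) hw.2
    ((((hrpow _).mul hψ).pow 2).mono hsub) ((hr'.neg.mul (hrpow (2 * g))).mono hsub)
    fun t ht => mul_nonneg (neg_nonneg.2 (hr'neg t (hsub (Ioc_subset_Icc_self ht))).le)
      (Real.rpow_nonneg (hpos t (hsub (Ioc_subset_Icc_self ht))).le _)
  refine ⟨v, hv, ?_⟩
  calc (r v ^ (-g) * ψ v) ^ 2 * ((r b ^ (2 * g + 1) - R ^ (2 * g + 1)) / -(2 * g + 1))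
      ≤ (r v ^ (-g) * ψ v) ^ 2 * ∫ t in Ioc w b, -r' t * r t ^ (2 * g) := by
        gcongr
        exact le_setIntegral_Ioc_neg_mul_rpow hr hr' hpos (by linarith) hw hR hRw
    _ ≤ ∫ t in Ioc w b, (r t ^ (-g) * ψ t) ^ 2 * (-r' t * r t ^ (2 * g)) := hmean
    _ = ∫ t in Ioc w b, -r' t * ψ t ^ 2 :=
        setIntegral_congr_fun measurableSet_Ioc fun t ht =>
          rpow_neg_mul_sq_mul_rpow (hpos t (hsub (Ioc_subset_Icc_self ht))) _
    _ ≤ ∫ t in Ioc a b, -r' t * ψ t ^ 2 := by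
        refine setIntegral_mono_set hL2 ?_ (Ioc_subset_Ioc_left hw.1.le).eventuallyLE
        filter_upwards [ae_restrict_mem measurableSet_Ioc] with t ht
        exact mul_nonneg (neg_nonneg.2 (hr'neg t ht).le) (sq_nonneg _)

theorem stmt_13_general (κ g C₀ A L : ℝ) (hκ : κ ∈ Set.Ioo (0 : ℝ) 1) (hg : g = -3 / 2 + κ) :
    ∃ C > 0, ∀ (uI uH : ℝ) (r ψ r' ψ' : ℝ → ℝ),
      uI < uH →
      (∀ u ∈ Set.Ioc uI uH, HasDerivWithinAt r (r' u) (Set.Ioc uI uH) u) →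
      ContinuousOn r' (Set.Ioc uI uH) →
      (∀ u ∈ Set.Ioc uI uH, 0 < r u) →
      (∀ u ∈ Set.Ioc uI uH, r' u < 0) →
      Filter.Tendsto r (nhdsWithin uI (Set.Ioi uI)) Filter.atTop →
      (∀ u ∈ Set.Ioc uI uH, (r u) ^ 2 / C₀ ≤ -(r' u)) →
      (∀ u ∈ Set.Ioc uI uH, HasDerivWithinAt ψ (ψ' u) (Set.Ioc uI uH) u) →
      ContinuousOn ψ' (Set.Ioc uI uH) →
      MeasureTheory.IntegrableOn
        (fun u => (r u) ^ 4 / (-(r' u)) * (ψ' u - g * (r' u / r u) * ψ u) ^ 2)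
        (Set.Ioc uI uH) →
      MeasureTheory.IntegrableOn (fun u => (-(r' u)) * (ψ u) ^ 2) (Set.Ioc uI uH) →
      r uH = A → uH - uI = L →
      ∀ u ∈ Set.Ioc uI uH,
        |r u ^ ((3 : ℝ) / 2 - κ) * ψ u|
          ≤ C * (Real.sqrt (∫ u' in Set.Ioc uI uH,
                  (r u') ^ 4 / (-(r' u')) * (ψ' u' - g * (r' u' / r u') * ψ u') ^ 2)
              + Real.sqrt (∫ u' in Set.Ioc uI uH, (-(r' u')) * (ψ u') ^ 2)) := by
  have hg₁ : -3 / 2 < g := by linarith [hκ.1]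
  have hg₂ : g < -1 / 2 := by linarith [hκ.2]
  rcases le_or_gt A 0 with hA | hA
  · exact ⟨1, one_pos, fun uI uH r _ _ _ hlt _ _ hpos _ _ _ _ _ _ _ hrA _ _ _ =>
      absurd (hrA ▸ hpos uH ⟨hlt, le_rfl⟩) hA.not_gt⟩
  set c₁ := A ^ (-(2 * g + 3)) / (2 * g + 3)
  set c₂ := (A ^ (2 * g + 1) - (2 * A) ^ (2 * g + 1)) / -(2 * g + 1)
  have hc₂ : 0 < c₂ := div_pos (sub_pos.2 (Real.rpow_lt_rpow_of_neg hA (by linarith)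
    (by linarith))) (by linarith)
  refine ⟨√c₁ + 1 / √c₂, by positivity,
    fun uI uH r ψ r' ψ' hlt hr hr' hpos hr'neg htend _ hψ hψ' hE hL2 hrA _ u hu => ?_⟩
  rw [show (3 : ℝ) / 2 - κ = -g by linarith]
  obtain ⟨w, hrw, hw⟩ := ((htend.eventually (eventually_ge_atTop (2 * A))).and
    (Ioo_mem_nhdsGT hlt)).exists
  obtain ⟨v, hv, hφv⟩ := exists_sq_rpow_neg_mul_le hr hr' hpos hr'neg
    (fun t ht => (hψ t ht).continuousWithinAt) hL2 hg₂ (Ioo_subset_Ioc_self hw) (by linarith) hrw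
  have hosc := abs_sub_rpow_neg_mul_le hr hr' hpos hr'neg hψ hψ' hE hg₁
    (lt_min hu.1 (hw.1.trans_le hv.1)) ⟨min_le_right u v, hv.2⟩ ⟨min_le_left u v, hu.2⟩
  rw [hrA] at hφv hosc
  have hφv' : |r v ^ (-g) * ψ v| ≤ √(∫ t in Ioc uI uH, -r' t * ψ t ^ 2) / √c₂ := by
    rw [le_div_iff₀ (Real.sqrt_pos.2 hc₂), ← Real.sqrt_sq_eq_abs,
      ← Real.sqrt_mul (sq_nonneg _)]
    exact Real.sqrt_le_sqrt hφv
  set E₁ := ∫ t in Ioc uI uH, r t ^ 4 / -r' t * (ψ' t - g * (r' t / r t) * ψ t) ^ 2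
  set E₂ := ∫ t in Ioc uI uH, -r' t * ψ t ^ 2
  calc |r u ^ (-g) * ψ u|
      ≤ |r v ^ (-g) * ψ v| + |r u ^ (-g) * ψ u - r v ^ (-g) * ψ v| := by
        linarith [abs_sub_abs_le_abs_sub (r u ^ (-g) * ψ u) (r v ^ (-g) * ψ v)]
    _ ≤ √E₂ / √c₂ + √E₁ * √c₁ := add_le_add hφv' hosc
    _ ≤ (√c₁ + 1 / √c₂) * (√E₁ + √E₂) := by
        rw [show (√c₁ + 1 / √c₂) * (√E₁ + √E₂) =
          √E₂ / √c₂ + √E₁ * √c₁ + (√c₁ * √E₂ + √E₁ / √c₂) by ring]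
        exact le_add_of_nonneg_right (by positivity)

/-- Sobolev inequality along an ingoing null ray: there is a constant `C > 0`,
depending only on `κ`, `C₀`, the value `A = r(u_H)` and the length `L = u_H − u_I`,
such that `|r(u)^{3/2−κ}ψ(u)| ≤ C(‖ψ‖_{twisted H¹} + ‖ψ‖_{weighted L²})`, where
`∇̃ψ = ψ' − g(r'/r)ψ` and `g = −3/2 + κ`. -/
theorem stmt_13 (κ g C₀ A L : ℝ) (hκ : κ ∈ Set.Ioo (0 : ℝ) 1) (hg : g = -3 / 2 + κ)
    (hC₀ : 0 < C₀) :
    ∃ C > 0, ∀ (uI uH : ℝ) (r ψ r' ψ' : ℝ → ℝ),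
      uI < uH →
      (∀ u ∈ Set.Ioc uI uH, HasDerivWithinAt r (r' u) (Set.Ioc uI uH) u) →
      ContinuousOn r' (Set.Ioc uI uH) →
      (∀ u ∈ Set.Ioc uI uH, 0 < r u) →
      (∀ u ∈ Set.Ioc uI uH, r' u < 0) →
      Filter.Tendsto r (nhdsWithin uI (Set.Ioi uI)) Filter.atTop →
      (∀ u ∈ Set.Ioc uI uH, (r u) ^ 2 / C₀ ≤ -(r' u)) →
      (∀ u ∈ Set.Ioc uI uH, HasDerivWithinAt ψ (ψ' u) (Set.Ioc uI uH) u) →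
      ContinuousOn ψ' (Set.Ioc uI uH) →
      MeasureTheory.IntegrableOn
        (fun u => (r u) ^ 4 / (-(r' u)) * (ψ' u - g * (r' u / r u) * ψ u) ^ 2)
        (Set.Ioc uI uH) →
      MeasureTheory.IntegrableOn (fun u => (-(r' u)) * (ψ u) ^ 2) (Set.Ioc uI uH) →
      r uH = A → uH - uI = L →
      ∀ u ∈ Set.Ioc uI uH,
        |r u ^ ((3 : ℝ) / 2 - κ) * ψ u|
          ≤ C * (Real.sqrt (∫ u' in Set.Ioc uI uH,
                  (r u') ^ 4 / (-(r' u')) * (ψ' u' - g * (r' u' / r u') * ψ u') ^ 2)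
              + Real.sqrt (∫ u' in Set.Ioc uI uH, (-(r' u')) * (ψ u') ^ 2)) :=
  stmt_13_general κ g C₀ A L hκ hg
end

section
/- Let v₀ ∈ ℝ, c > 0, and C ≥ 1, and let F : [v₀, ∞) → [0, ∞) be locally integrable. Suppose that for all v₀ ≤ v₁ ≤ v₂ one has F(v₂) + c·∫_{v₁}^{v₂} F(s) ds ≤ C·F(v₁). Then there exist constants α > 0 and K > 0, depending only on c and C, such that F(v) ≤ K·F(v₀)·e^{−α(v−v₀)} for all v ≥ v₀. -/
/-! Monotonicity up to the constant `C` bounds `∫_{v}^{v+L} F` below by `L·F(v+L)/C`, so the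
hypothesis gives `(C + cL)·F(v+L) ≤ C²·F(v)`. For `L = C(2C-1)/c` this halves `F` over every
interval of length `L`; iterating along `v₀ + nL` and using monotonicity up to `C` once more
in between gives exponential decay at rate `log 2 / L`. -/

open MeasureTheory Set Real

section

variable {F : ℝ → ℝ} {v₀ c C : ℝ}

theorem le_mul_of_add_mul_integral_le (hF : ∀ v, v₀ ≤ v → 0 ≤ F v) (hc : 0 ≤ c)
    (h : ∀ v₁ v₂, v₀ ≤ v₁ → v₁ ≤ v₂ → F v₂ + c * ∫ t in v₁..v₂, F t ≤ C * F v₁)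
    {v₁ v₂ : ℝ} (h₁ : v₀ ≤ v₁) (h₁₂ : v₁ ≤ v₂) : F v₂ ≤ C * F v₁ := by
  have : 0 ≤ ∫ t in v₁..v₂, F t :=
    intervalIntegral.integral_nonneg h₁₂ fun t ht ↦ hF t (h₁.trans ht.1)
  nlinarith [h v₁ v₂ h₁ h₁₂]

theorem sub_mul_le_mul_integral (hloc : LocallyIntegrableOn F (Ici v₀))
    (hmono : ∀ v₁ v₂, v₀ ≤ v₁ → v₁ ≤ v₂ → F v₂ ≤ C * F v₁)
    {v₁ v₂ : ℝ} (h₁ : v₀ ≤ v₁) (h₁₂ : v₁ ≤ v₂) :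
    (v₂ - v₁) * F v₂ ≤ C * ∫ t in v₁..v₂, F t := by
  have hint : IntervalIntegrable F volume v₁ v₂ :=
    (intervalIntegrable_iff_integrableOn_Icc_of_le h₁₂).2 <|
      hloc.integrableOn_compact_subset (fun t ht ↦ h₁.trans ht.1) isCompact_Icc
  calc (v₂ - v₁) * F v₂ = ∫ _ in v₁..v₂, F v₂ := by simp
    _ ≤ ∫ t in v₁..v₂, C * F t :=
      intervalIntegral.integral_mono_on h₁₂ intervalIntegrable_const (hint.const_mul C)
        fun t ht ↦ hmono t v₂ (h₁.trans ht.1) ht.2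
    _ = C * ∫ t in v₁..v₂, F t := intervalIntegral.integral_const_mul C F

theorem add_mul_mul_le_sq_mul (hF : ∀ v, v₀ ≤ v → 0 ≤ F v)
    (hloc : LocallyIntegrableOn F (Ici v₀)) (hc : 0 ≤ c) (hC : 0 ≤ C)
    (h : ∀ v₁ v₂, v₀ ≤ v₁ → v₁ ≤ v₂ → F v₂ + c * ∫ t in v₁..v₂, F t ≤ C * F v₁)
    {v L : ℝ} (hv : v₀ ≤ v) (hL : 0 ≤ L) : (C + c * L) * F (v + L) ≤ C ^ 2 * F v := by
  have hvL : v ≤ v + L := le_add_of_nonneg_right hL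
  have hlower := sub_mul_le_mul_integral hloc
    (fun _ _ ↦ le_mul_of_add_mul_integral_le hF hc h) hv hvL
  rw [add_sub_cancel_left] at hlower
  nlinarith [h v (v + L) hv hvL, mul_le_mul_of_nonneg_left hlower hc]

theorem le_exp_mul_of_step_at_nat_mul {α L : ℝ}
    (hstep : ∀ v, v₀ ≤ v → F (v + L) ≤ exp (-(α * L)) * F v) (hL : 0 ≤ L) (n : ℕ) :
    F (v₀ + n * L) ≤ exp (-(α * (n * L))) * F v₀ := by
  induction n with
  | zero => simp
  | succ n ih =>
    calc F (v₀ + ↑(n + 1) * L) = F (v₀ + n * L + L) := by push_cast; ring_nf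
      _ ≤ exp (-(α * L)) * F (v₀ + n * L) := hstep _ (le_add_of_nonneg_right (by positivity))
      _ ≤ exp (-(α * L)) * (exp (-(α * (n * L))) * F v₀) := by gcongr
      _ = exp (-(α * (↑(n + 1) * L))) * F v₀ := by
        rw [← mul_assoc, ← exp_add]; push_cast; ring_nf

theorem le_mul_exp_of_le_exp_mul_add {α L : ℝ} (hL : 0 < L) (hα : 0 ≤ α) (hC : 0 ≤ C)
    (hF₀ : 0 ≤ F v₀) (hmono : ∀ v₁ v₂, v₀ ≤ v₁ → v₁ ≤ v₂ → F v₂ ≤ C * F v₁)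
    (hstep : ∀ v, v₀ ≤ v → F (v + L) ≤ exp (-(α * L)) * F v) {v : ℝ} (hv : v₀ ≤ v) :
    F v ≤ C * exp (α * L) * F v₀ * exp (-α * (v - v₀)) := by
  set n := ⌊(v - v₀) / L⌋₊
  have hn : n * L ≤ v - v₀ := (le_div_iff₀ hL).1 (Nat.floor_le (by positivity))
  have hn' : v - v₀ ≤ (n + 1) * L := (div_le_iff₀ hL).1 (Nat.lt_floor_add_one _).le
  have hv₀n : v₀ ≤ v₀ + n * L := le_add_of_nonneg_right (by positivity)
  calc F v ≤ C * F (v₀ + n * L) := hmono _ _ hv₀n (by linarith)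
    _ ≤ C * (exp (-(α * (n * L))) * F v₀) :=
      mul_le_mul_of_nonneg_left (le_exp_mul_of_step_at_nat_mul hstep hL.le n) hC
    _ = C * exp (α * L) * F v₀ * exp (-(α * ((n + 1) * L))) := by
      rw [show -(α * (n * L)) = α * L + -(α * ((n + 1) * L)) by ring, exp_add]
      ring
    _ ≤ C * exp (α * L) * F v₀ * exp (-α * (v - v₀)) := by
      gcongr
      nlinarith

end

/-- Pigeonhole argument converting an integrated decay estimate into exponential
decay: if `F ≥ 0` satisfies `F(v₂) + c∫_{v₁}^{v₂}F ≤ C·F(v₁)` for all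
`v₀ ≤ v₁ ≤ v₂`, then `F(v) ≤ K·F(v₀)·e^{−α(v−v₀)}` with `α, K > 0` depending only
on `c` and `C`. -/
theorem stmt_16 (c C : ℝ) (hc : 0 < c) (hC : 1 ≤ C) :
    ∃ α > 0, ∃ K > 0, ∀ (v₀ : ℝ) (F : ℝ → ℝ),
      (∀ v, v₀ ≤ v → 0 ≤ F v) →
      MeasureTheory.LocallyIntegrableOn F (Set.Ici v₀) →
      (∀ v₁ v₂, v₀ ≤ v₁ → v₁ ≤ v₂ → F v₂ + c * ∫ t in v₁..v₂, F t ≤ C * F v₁) →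
      ∀ v, v₀ ≤ v → F v ≤ K * F v₀ * Real.exp (-α * (v - v₀)) := by
  set L := C * (2 * C - 1) / c
  have hL : 0 < L := div_pos (by nlinarith) hc
  have hcL : C + c * L = 2 * C ^ 2 := by simp only [L]; field_simp; ring
  set α := log 2 / L
  have hαL : α * L = log 2 := div_mul_cancel₀ _ hL.ne'
  have hα : 0 < α := div_pos (log_pos one_lt_two) hL
  refine ⟨α, hα, C * exp (α * L), by positivity, fun v₀ F hF hloc h v hv ↦ ?_⟩
  refine le_mul_exp_of_le_exp_mul_add hL hα.le (by linarith) (hF v₀ le_rfl)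
    (fun _ _ ↦ le_mul_of_add_mul_integral_le hF hc.le h) (fun w hw ↦ ?_) hv
  have hhalf := add_mul_mul_le_sq_mul hF hloc hc.le (by linarith) h hw hL.le
  rw [hcL] at hhalf
  rw [hαL, exp_neg, exp_log two_pos]
  nlinarith [hF w hw, hF (w + L) (by linarith), pow_pos (by linarith : (0 : ℝ) < C) 2]
end
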